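/- Let q be a positive integer and set κ_q = ζ₀/(2πq), where ζ₀ is the unique root in (0, π) of φ(ζ) = 1 with φ(ζ) = (sinζ/ζ)(2−cosζ); then κ_q ∈ (0, 1/2), and χ₁(κ; q, q) < 0 for all κ ∈ (0, κ_q), while χ₁(κ; q, q) > 0 for all κ ∈ (κ_q, 1/2). -/

import Mathlib

open MeasureTheory Real Set Filter
open scoped ENNReal

noncomputable section

/-- The quantity `χ₁(κ; ℓ, q)`. -/
def chi1 (κ : ℝ) (l q : ℕ) : ℝ :=
  if l = q then
    κ + Real.sin (4 * π * q * κ) / (4 * π * q) - Real.sin (2 * π * q * κ) / (π * q)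
  else
    Real.sin (2 * π * ((l:ℝ) - q) * κ) / (2 * π * ((l:ℝ) - q))
      + Real.sin (2 * π * ((l:ℝ) + q) * κ) / (2 * π * ((l:ℝ) + q))
      - Real.sin (2 * π * q * κ) / (π * q)

/-!
With `g ζ = ζ - sin ζ (2 - cos ζ) = ζ (1 - φ ζ)` (`phiDefect` below) one has
`χ₁(κ; q, q) = g (2πqκ) / (2πq)`. Since `g' ζ = 2 cos ζ (cos ζ - 1)`, `g` decreases from
`g 0 = 0` on `[0, π/2]` and increases on `[π/2, π]`, while `g > 0` on `[π, ∞)` because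
`sin ζ (2 - cos ζ) ≤ 3 < π`. So `ζ₀` is the only positive zero of `g`, `g < 0` on `(0, ζ₀)` and
`g > 0` on `(ζ₀, ∞)`; finally `κ ↦ 2πqκ` is an increasing bijection from `(0, 1/2)` onto
`(0, πq)` sending `κ_q` to `ζ₀`.
-/

namespace Chi1

def phiDefect (ζ : ℝ) : ℝ := ζ - sin ζ * (2 - cos ζ)

lemma phiDefect_zero : phiDefect 0 = 0 := by
  simp [phiDefect]

lemma phiDefect_eq_zero_of_phi_eq_one {ζ : ℝ} (hζ : ζ ≠ 0)
    (h : sin ζ / ζ * (2 - cos ζ) = 1) : phiDefect ζ = 0 := by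
  rw [div_mul_eq_mul_div, div_eq_one_iff_eq hζ] at h
  simp [phiDefect, h]

lemma chi1_self_eq_phiDefect (κ : ℝ) {q : ℕ} (hq : q ≠ 0) :
    chi1 κ q q = phiDefect (2 * π * q * κ) / (2 * π * q) := by
  have hq' : (q : ℝ) ≠ 0 := Nat.cast_ne_zero.mpr hq
  have h4 : 4 * π * q * κ = 2 * (2 * π * q * κ) := by ring
  rw [chi1, if_pos rfl, h4, sin_two_mul, phiDefect]
  field_simp
  ring

lemma hasDerivAt_phiDefect (ζ : ℝ) :
    HasDerivAt phiDefect (2 * cos ζ * (cos ζ - 1)) ζ := by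
  have h : HasDerivAt phiDefect (1 - (cos ζ * (2 - cos ζ) + sin ζ * - -sin ζ)) ζ :=
    (hasDerivAt_id' ζ).fun_sub ((hasDerivAt_sin ζ).fun_mul ((hasDerivAt_cos ζ).const_sub 2))
  convert h using 1
  nlinarith [sin_sq_add_cos_sq ζ]

lemma continuous_phiDefect : Continuous phiDefect := by
  unfold phiDefect
  fun_prop

lemma strictAntiOn_phiDefect : StrictAntiOn phiDefect (Icc 0 (π / 2)) := by
  refine strictAntiOn_of_deriv_neg (convex_Icc _ _) continuous_phiDefect.continuousOn ?_
  intro ζ hζ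
  rw [interior_Icc] at hζ
  have hcos_pos : 0 < cos ζ := cos_pos_of_mem_Ioo ⟨by linarith [hζ.1, pi_pos], hζ.2⟩
  have hcos_lt : cos ζ < 1 := by
    rw [← cos_zero]
    exact cos_lt_cos_of_nonneg_of_le_pi le_rfl (by linarith [pi_pos, hζ.2]) hζ.1
  rw [(hasDerivAt_phiDefect ζ).deriv]
  nlinarith

lemma strictMonoOn_phiDefect : StrictMonoOn phiDefect (Icc (π / 2) π) := by
  refine strictMonoOn_of_deriv_pos (convex_Icc _ _) continuous_phiDefect.continuousOn ?_
  intro ζ hζ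
  rw [interior_Icc] at hζ
  have hcos_neg : cos ζ < 0 := cos_neg_of_pi_div_two_lt_of_lt hζ.1 (by linarith [hζ.2, pi_pos])
  rw [(hasDerivAt_phiDefect ζ).deriv]
  nlinarith

lemma phiDefect_pos_of_pi_le {ζ : ℝ} (hζ : π ≤ ζ) : 0 < phiDefect ζ := by
  have h : sin ζ * (2 - cos ζ) ≤ 3 := by
    nlinarith [sin_le_one ζ, neg_one_le_sin ζ, cos_le_one ζ, neg_one_le_cos ζ]
  unfold phiDefect
  linarith [pi_gt_three]

lemma phiDefect_neg_of_mem_Ioc {ζ : ℝ} (hζ : ζ ∈ Ioc 0 (π / 2)) : phiDefect ζ < 0 := by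
  have h := strictAntiOn_phiDefect (left_mem_Icc.2 (by linarith [hζ.1, hζ.2]))
    (Ioc_subset_Icc_self hζ) hζ.1
  rwa [phiDefect_zero] at h

section Root

variable {ζ₀ : ℝ} (h₀ : 0 < ζ₀) (hroot : phiDefect ζ₀ = 0)
include h₀ hroot

lemma mem_Ioo_of_phiDefect_eq_zero : ζ₀ ∈ Ioo (π / 2) π := by
  constructor
  · by_contra! h
    exact (phiDefect_neg_of_mem_Ioc ⟨h₀, h⟩).ne hroot
  · by_contra! h
    exact (phiDefect_pos_of_pi_le h).ne' hroot

lemma phiDefect_neg_of_mem_Ioo {ζ : ℝ} (hζ : ζ ∈ Ioo 0 ζ₀) : phiDefect ζ < 0 := by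
  obtain ⟨hπ2, hπ⟩ := mem_Ioo_of_phiDefect_eq_zero h₀ hroot
  rcases le_or_gt ζ (π / 2) with h | h
  · exact phiDefect_neg_of_mem_Ioc ⟨hζ.1, h⟩
  · rw [← hroot]
    exact strictMonoOn_phiDefect ⟨h.le, by linarith [hζ.2]⟩ ⟨hπ2.le, hπ.le⟩ hζ.2

lemma phiDefect_pos_of_lt {ζ : ℝ} (hζ : ζ₀ < ζ) : 0 < phiDefect ζ := by
  obtain ⟨hπ2, hπ⟩ := mem_Ioo_of_phiDefect_eq_zero h₀ hroot
  rcases le_or_gt ζ π with h | h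
  · rw [← hroot]
    exact strictMonoOn_phiDefect ⟨hπ2.le, hπ.le⟩ ⟨by linarith, h⟩ hζ
  · exact phiDefect_pos_of_pi_le h.le

end Root

end Chi1

open Chi1 in
/-- Sign change of `χ₁(κ; q, q)` at `κ_q = ζ₀/(2πq)`, where `ζ₀` is the
unique root in `(0, π)` of `(sin ζ/ζ)(2 − cos ζ) = 1`. -/
theorem stmt14 (q : ℕ) (hq : 0 < q) (ζ₀ : ℝ)
    (hζ₀ : ζ₀ ∈ Set.Ioo 0 π) (hroot : (Real.sin ζ₀ / ζ₀) * (2 - Real.cos ζ₀) = 1) :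
    ζ₀ / (2 * π * q) ∈ Set.Ioo (0:ℝ) (1/2) ∧
    (∀ κ ∈ Set.Ioo (0:ℝ) (ζ₀ / (2 * π * q)), chi1 κ q q < 0) ∧
    (∀ κ ∈ Set.Ioo (ζ₀ / (2 * π * q)) (1/2:ℝ), 0 < chi1 κ q q) := by
  have hq1 : (1 : ℝ) ≤ q := Nat.one_le_cast.mpr hq
  have hscale : 0 < 2 * π * q := by positivity
  have hdefect : phiDefect ζ₀ = 0 := phiDefect_eq_zero_of_phi_eq_one hζ₀.1.ne' hroot
  refine ⟨⟨div_pos hζ₀.1 hscale, ?_⟩, fun κ hκ => ?_, fun κ hκ => ?_⟩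
  · rw [div_lt_iff₀ hscale]
    nlinarith [hζ₀.2, pi_pos]
  · obtain ⟨hκ0, hκq⟩ := hκ
    rw [lt_div_iff₀' hscale] at hκq
    rw [chi1_self_eq_phiDefect κ hq.ne']
    exact div_neg_of_neg_of_pos
      (phiDefect_neg_of_mem_Ioo hζ₀.1 hdefect ⟨by positivity, hκq⟩) hscale
  · rw [chi1_self_eq_phiDefect κ hq.ne']
    have hκq : ζ₀ < 2 * π * q * κ := (div_lt_iff₀' hscale).mp hκ.1
    exact div_pos (phiDefect_pos_of_lt hζ₀.1 hdefect hκq) hscale
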